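/- Let G be a finite group, N ⊴ G, and B = b^G, C = c^G noncentral G-classes in N with gcd(|B|,|C|) = 1, |B| < |C|, and distance at least 3 between B and C in Γ_G(N). Then |BC| = |C|, C·B·B^{-1} = C, C·⟨BB^{-1}⟩ = C, ⟨BB^{-1}⟩ ⊆ ⟨CC^{-1}⟩, and |⟨BB^{-1}⟩| divides |C|. -/

import Mathlib

/-!
As `|B|` and `|C|` are coprime, `C_G(b) C_G(c) = G`, so `BC` is the single class `D` of `b c`
and `|D|` divides `|B| |C|`. Since `b C ⊆ D`, `|D| ≥ |C| > |B|`; in particular `b c` is noncentral,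
so it is a vertex of `Γ_G(N)`, and as it is not a common neighbour of `B` and `C`, `|D|` is coprime
to `|B|` or to `|C|`. Either way `|D| = |C|`. Then for `x ∈ B` the set `C x ⊆ C B = D` has `|C|`
elements, so `C x = D`; hence every `x y⁻¹` with `x, y ∈ B` fixes `C` under right multiplication
and `C` is a union of left cosets of `⟨BB⁻¹⟩`. The remaining claims follow, using that `C` is
closed under conjugation for `⟨BB⁻¹⟩ ⊆ CC⁻¹`.
-/

open Pointwise

/-- The `G`-conjugacy class of `x`. -/
def classSet {G : Type*} [Group G] (x : G) : Set G := {y | IsConj x y}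

/-- The size of the `G`-conjugacy class of `x`. -/
noncomputable def classSize {G : Type*} [Group G] (x : G) : ℕ := Nat.card (classSet x)

/-- The graph `Γ_G(N)` on the noncentral elements of `N` (each `G`-class blown up to a
clique of mutually conjugate elements, which does not affect distances between distinct
classes nor connectedness): two vertices are adjacent iff their `G`-class sizes are not
coprime. -/
noncomputable def classGraph (G : Type*) [Group G] (N : Subgroup G) :
    SimpleGraph {x : G // x ∈ N ∧ x ∉ Subgroup.center G} where
  Adj a b := a ≠ b ∧ ¬ Nat.Coprime (classSize a.1) (classSize b.1)
  symm := ⟨fun a b hab => ⟨hab.1.symm, fun hco => hab.2 hco.symm⟩⟩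
  loopless := ⟨fun a ha => ha.1 rfl⟩

theorem Nat.eq_of_dvd_mul_of_coprime_or_coprime {m n d : ℕ} (hm : 0 < m) (hmn : m < n)
    (hnd : n ≤ d) (hd : d ∣ m * n) (hco : m.Coprime d ∨ d.Coprime n) : d = n := by
  rcases hco with hmd | hdn
  · exact le_antisymm (Nat.le_of_dvd (by omega) (hmd.symm.dvd_of_dvd_mul_left hd)) hnd
  · have := Nat.le_of_dvd hm (hdn.dvd_of_dvd_mul_right hd)
    omega

namespace Subgroup

variable {G : Type*} [Group G] [Finite G] {H K : Subgroup G}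

theorem index_inf_of_coprime_index (h : H.index.Coprime K.index) :
    (H ⊓ K).index = H.index * K.index :=
  le_antisymm index_inf_le <| Nat.le_of_dvd (Nat.pos_of_ne_zero index_ne_zero_of_finite) <|
    h.mul_dvd_of_dvd_of_dvd (index_dvd_of_le inf_le_left) (index_dvd_of_le inf_le_right)

theorem relIndex_eq_index_of_coprime_index (h : H.index.Coprime K.index) :
    H.relIndex K = H.index := by
  have h_mul := relIndex_mul_index (H := H ⊓ K) inf_le_right
  rw [inf_relIndex_right, index_inf_of_coprime_index h] at h_mul
  exact Nat.eq_of_mul_eq_mul_right (Nat.pos_of_ne_zero index_ne_zero_of_finite) h_mul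

theorem mul_eq_univ_of_coprime_index (h : H.index.Coprime K.index) :
    (K : Set G) * (H : Set G) = Set.univ := by
  -- `K ⧸ (H ∩ K)` embeds into `G ⧸ H` and has the same size, so `K` meets every left coset of `H`
  have h_surj : Function.Surjective (quotientSubgroupOfEmbeddingOfLE H (le_top : K ≤ ⊤)) := by
    refine ((Nat.bijective_iff_injective_and_card _).mpr ⟨Function.Embedding.injective _, ?_⟩).2
    change H.relIndex K = H.relIndex ⊤
    rw [relIndex_top_right, relIndex_eq_index_of_coprime_index h]
  refine Set.eq_univ_of_forall fun g => ?_
  obtain ⟨q, hq⟩ := h_surj (QuotientGroup.mk ⟨g, mem_top g⟩)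
  induction q using QuotientGroup.induction_on with
  | H k =>
    rw [quotientSubgroupOfEmbeddingOfLE_apply_mk, QuotientGroup.eq, mem_subgroupOf] at hq
    exact ⟨k, k.2, _, hq, mul_inv_cancel_left _ _⟩

end Subgroup

namespace Set

variable {G : Type*} [Group G]

theorem mul_closure_mul_inv_self_eq {S T : Set G} (h : ∀ x ∈ T, ∀ y ∈ T, S * {x} = S * {y}) :
    S * Subgroup.closure (T * T⁻¹) = S := by
  set K := (MulAction.stabilizer Gᵐᵒᵖ S).unop
  have mem_K {g : G} : g ∈ K ↔ S * {g} = S := by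
    rw [Subgroup.mem_unop, MulAction.mem_stabilizer_iff, mul_singleton]
    rfl
  have h_le : Subgroup.closure (T * T⁻¹) ≤ K := by
    rw [Subgroup.closure_le]
    rintro _ ⟨x, hx, y, hy, rfl⟩
    rw [SetLike.mem_coe, mem_K]
    calc S * {x * y} = S * {x} * {y} := by rw [mul_assoc, singleton_mul_singleton]
      _ = S * {y⁻¹} * {y} := by rw [h x hx _ hy]
      _ = S := by rw [mul_assoc, singleton_mul_singleton, inv_mul_cancel, singleton_one, mul_one]
  refine (mul_subset_iff.mpr fun s hs g hg => ?_).antisymm (subset_mul_left S (one_mem _))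
  rw [← mem_K.mp (h_le hg)]
  exact mul_mem_mul hs rfl

theorem subset_mul_inv_self_of_mul_subset {S T : Set G} (hS : ∀ g, ∀ s ∈ S, g * s * g⁻¹ ∈ S)
    {c : G} (hc : c ∈ S) (hT : S * T ⊆ S) : T ⊆ S * S⁻¹ := by
  intro t ht
  -- `t c = t (c t) t⁻¹` lies in `S`
  have htc : t * c ∈ S := by
    simpa [mul_assoc] using hS t _ (hT (mul_mem_mul hc ht))
  exact ⟨t * c, htc, c⁻¹, by simpa using hc, mul_inv_cancel_right t c⟩

end Set

section ConjugacyClasses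

variable {G : Type*} [Group G]

theorem conj_mem_classSet {x y : G} (hy : y ∈ classSet x) (g : G) : g * y * g⁻¹ ∈ classSet x :=
  hy.trans (isConj_iff.mpr ⟨g, rfl⟩)

theorem classSet_mul_comm (x y : G) : classSet (x * y) = classSet (y * x) := by
  have h : IsConj (x * y) (y * x) := isConj_iff.mpr ⟨y, by group⟩
  ext z
  exact ⟨h.symm.trans, h.trans⟩

theorem classSize_eq_index_centralizer (x : G) :
    classSize x = (Subgroup.centralizer {x}).index := by
  have h_orbit : classSet x = MulAction.orbit (ConjAct G) x := by
    ext y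
    rw [ConjAct.mem_orbit_conjAct, isConj_comm]
    rfl
  have h_index :
      (Subgroup.centralizer {x}).index = (MulAction.stabilizer (ConjAct G) x).index :=
    Subgroup.centralizer_eq_comap_stabilizer x ▸
      Subgroup.index_comap_of_surjective _ ConjAct.toConjAct.surjective
  rw [h_index, MulAction.index_stabilizer, ← h_orbit, classSize, Nat.card_coe_set_eq]

theorem classSize_eq_one_iff {x : G} : classSize x = 1 ↔ x ∈ Subgroup.center G := by
  rw [classSize_eq_index_centralizer, Subgroup.index_eq_one,
    Subgroup.centralizer_eq_top_iff_subset, Set.singleton_subset_iff, SetLike.mem_coe]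

variable [Finite G]

theorem classSize_pos (x : G) : 0 < classSize x :=
  haveI : Nonempty (classSet x) := ⟨⟨x, IsConj.refl x⟩⟩
  Nat.card_pos

theorem classSet_mul_classSet_of_coprime {b c : G} (h : (classSize b).Coprime (classSize c)) :
    classSet b * classSet c = classSet (b * c) := by
  rw [classSize_eq_index_centralizer, classSize_eq_index_centralizer] at h
  refine subset_antisymm ?_ ?_
  · rintro _ ⟨_, hy, _, hz, rfl⟩
    obtain ⟨g, rfl⟩ := isConj_iff.mp hy
    obtain ⟨t, rfl⟩ := isConj_iff.mp hz
    -- `g⁻¹ t = u k` with `u` centralizing `b` and `k` centralizing `c`, so `g u` conjugates both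
    obtain ⟨u, hu, k, hk, hukt⟩ := Set.mem_mul.mp <|
      (Subgroup.mul_eq_univ_of_coprime_index h.symm).symm ▸ Set.mem_univ (g⁻¹ * t)
    rw [SetLike.mem_coe, Subgroup.mem_centralizer_singleton_iff] at hu hk
    obtain rfl : t = g * (u * k) := by rw [hukt]; group
    refine isConj_iff.mpr ⟨g * u, ?_⟩
    calc g * u * (b * c) * (g * u)⁻¹ = g * (u * b * u⁻¹) * (u * c * u⁻¹) * g⁻¹ := by group
      _ = g * b * (u * (k * c * k⁻¹) * u⁻¹) * g⁻¹ := by rw [hu, hk]; group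
      _ = g * b * g⁻¹ * (g * (u * k) * c * (g * (u * k))⁻¹) := by group
  · intro y hy
    obtain ⟨g, rfl⟩ := isConj_iff.mp hy
    exact ⟨_, conj_mem_classSet (IsConj.refl b) g, _, conj_mem_classSet (IsConj.refl c) g, by group⟩

theorem classSize_mul_dvd_of_coprime {b c : G} (h : (classSize b).Coprime (classSize c)) :
    classSize (b * c) ∣ classSize b * classSize c := by
  simp only [classSize_eq_index_centralizer] at h ⊢
  rw [← Subgroup.index_inf_of_coprime_index h]
  refine Subgroup.index_dvd_of_le fun g hg => ?_
  simp only [Subgroup.mem_inf, Subgroup.mem_centralizer_singleton_iff] at hg ⊢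
  rw [← mul_assoc, hg.1, mul_assoc, hg.2, mul_assoc]

theorem classSize_le_classSize_mul_of_coprime {b c : G}
    (h : (classSize b).Coprime (classSize c)) : classSize c ≤ classSize (b * c) := by
  have h_sub : b • classSet c ⊆ classSet (b * c) := by
    rw [← classSet_mul_classSet_of_coprime h]
    exact Set.smul_set_subset_mul (IsConj.refl b)
  simpa [classSize, Set.natCard_smul_set] using Nat.card_mono (Set.toFinite _) h_sub

theorem classSet_mul_singleton_eq_of_coprime {b c x : G}
    (h : (classSize b).Coprime (classSize c)) (h_size : classSize (b * c) = classSize c)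
    (hx : x ∈ classSet b) : classSet c * {x} = classSet (b * c) := by
  have h_sub : classSet c * {x} ⊆ classSet (b * c) := by
    rw [classSet_mul_comm, ← classSet_mul_classSet_of_coprime h.symm]
    exact Set.mul_subset_mul_left (Set.singleton_subset_iff.mpr hx)
  refine Set.eq_of_subset_of_ncard_le h_sub ?_ (Set.toFinite _)
  rw [Set.mul_singleton, Set.ncard_image_of_injective _ (mul_left_injective x),
    ← Nat.card_coe_set_eq, ← Nat.card_coe_set_eq]
  exact h_size.le

end ConjugacyClasses

theorem classSize_mul_eq_of_not_adj_common {G : Type*} [Group G] [Finite G] {N : Subgroup G}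
    {b c : G} (hb : b ∈ N ∧ b ∉ Subgroup.center G) (hc : c ∈ N ∧ c ∉ Subgroup.center G)
    (hco : (classSize b).Coprime (classSize c)) (hsize : classSize b < classSize c)
    (h_common : ∀ w, ¬ ((classGraph G N).Adj ⟨b, hb⟩ w ∧ (classGraph G N).Adj w ⟨c, hc⟩)) :
    classSize (b * c) = classSize c := by
  have h_le := classSize_le_classSize_mul_of_coprime hco
  have hbc : b * c ∈ N ∧ b * c ∉ Subgroup.center G := by
    refine ⟨N.mul_mem hb.1 hc.1, fun h => ?_⟩
    have := classSize_pos b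
    rw [← classSize_eq_one_iff] at h
    omega
  have h_coprime : (classSize b).Coprime (classSize (b * c)) ∨
      (classSize (b * c)).Coprime (classSize c) := by
    have hbc_ne_b : b * c ≠ b := fun h => hc.2 (mul_eq_left.mp h ▸ Subgroup.one_mem _)
    have hbc_ne_c : b * c ≠ c := fun h => hb.2 (mul_eq_right.mp h ▸ Subgroup.one_mem _)
    have := h_common ⟨b * c, hbc⟩
    simp only [classGraph, ne_eq, Subtype.mk.injEq] at this
    tauto
  exact Nat.eq_of_dvd_mul_of_coprime_or_coprime (classSize_pos b) hsize h_le
    (classSize_mul_dvd_of_coprime hco) h_coprime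

theorem stmt11_general {G : Type*} [Group G] [Finite G] (N : Subgroup G)
    (b c : G) (hb : b ∈ N ∧ b ∉ Subgroup.center G) (hc : c ∈ N ∧ c ∉ Subgroup.center G)
    (hco : Nat.Coprime (classSize b) (classSize c))
    (hsize : classSize b < classSize c)
    -- distance at least 3 between the classes of `b` and `c` in `Γ_G(N)`:
    -- they are not adjacent and have no common neighbour
    (hdist : ¬ (classGraph G N).Adj ⟨b, hb⟩ ⟨c, hc⟩ ∧
      ∀ w, ¬ ((classGraph G N).Adj ⟨b, hb⟩ w ∧ (classGraph G N).Adj w ⟨c, hc⟩)) :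
    Nat.card ↥(classSet b * classSet c) = Nat.card ↥(classSet c) ∧
    classSet c * classSet b * (classSet b)⁻¹ = classSet c ∧
    classSet c * (Subgroup.closure (classSet b * (classSet b)⁻¹) : Set G) = classSet c ∧
    Subgroup.closure (classSet b * (classSet b)⁻¹) ≤
      Subgroup.closure (classSet c * (classSet c)⁻¹) ∧
    Nat.card ↥(Subgroup.closure (classSet b * (classSet b)⁻¹)) ∣ Nat.card ↥(classSet c) := by
  have h_size := classSize_mul_eq_of_not_adj_common hb hc hco hsize hdist.2
  set B := classSet b
  set C := classSet c
  set H := Subgroup.closure (B * B⁻¹)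
  have hCH : C * H = C := Set.mul_closure_mul_inv_self_eq fun x hx y hy =>
    (classSet_mul_singleton_eq_of_coprime hco h_size hx).trans
      (classSet_mul_singleton_eq_of_coprime hco h_size hy).symm
  refine ⟨?_, ?_, hCH, ?_, ?_⟩
  · rw [classSet_mul_classSet_of_coprime hco]
    exact h_size
  · have h_one : (1 : G) ∈ B * B⁻¹ :=
      ⟨b, IsConj.refl b, b⁻¹, by rw [Set.mem_inv, inv_inv]; exact IsConj.refl b, mul_inv_cancel b⟩
    rw [mul_assoc]
    refine subset_antisymm ?_ (Set.subset_mul_left C h_one)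
    calc C * (B * B⁻¹) ⊆ C * H := Set.mul_subset_mul_left Subgroup.subset_closure
      _ = C := hCH
  · exact fun h hh => Subgroup.subset_closure <|
      Set.subset_mul_inv_self_of_mul_subset (fun g _ hs => conj_mem_classSet hs g)
        (IsConj.refl c) hCH.subset hh
  · rw [← hCH, Subgroup.card_mul_eq_card_subgroup_mul_card_quotient]
    exact dvd_mul_right _ _

theorem stmt11 {G : Type*} [Group G] [Finite G] (N : Subgroup G) (hN : N.Normal)
    (b c : G) (hb : b ∈ N ∧ b ∉ Subgroup.center G) (hc : c ∈ N ∧ c ∉ Subgroup.center G)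
    (hco : Nat.Coprime (classSize b) (classSize c))
    (hsize : classSize b < classSize c)
    -- distance at least 3 between the classes of `b` and `c` in `Γ_G(N)`:
    -- they are not adjacent and have no common neighbour
    (hdist : ¬ (classGraph G N).Adj ⟨b, hb⟩ ⟨c, hc⟩ ∧
      ∀ w, ¬ ((classGraph G N).Adj ⟨b, hb⟩ w ∧ (classGraph G N).Adj w ⟨c, hc⟩)) :
    Nat.card ↥(classSet b * classSet c) = Nat.card ↥(classSet c) ∧
    classSet c * classSet b * (classSet b)⁻¹ = classSet c ∧
    classSet c * (Subgroup.closure (classSet b * (classSet b)⁻¹) : Set G) = classSet c ∧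
    Subgroup.closure (classSet b * (classSet b)⁻¹) ≤
      Subgroup.closure (classSet c * (classSet c)⁻¹) ∧
    Nat.card ↥(Subgroup.closure (classSet b * (classSet b)⁻¹)) ∣ Nat.card ↥(classSet c) :=
  stmt11_general N b c hb hc hco hsize hdist
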